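/- arXiv:1003.3825 — 2 statements merged into one kernel-verified Lean document; each statement's English description precedes it below -/
import Mathlib

section
/- Let r, t, e be positive integers. If r > te, then there is no pure O-sequence of codimension r, socle degree e and type t. Moreover this bound is sharp: for r = te there is exactly one pure O-sequence of codimension te, socle degree e and type t. -/
/-- The degree of a monomial, given by its exponent vector. -/
def monDeg {r : ℕ} (M : Fin r → ℕ) : ℕ := ∑ j, M j

/-- `X` is a (monomial) order ideal: a nonempty finite set of monomials (exponent vectors)
closed under divisibility. -/
def IsOrderIdeal {r : ℕ} (X : Finset (Fin r → ℕ)) : Prop :=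
  X.Nonempty ∧ ∀ M ∈ X, ∀ N : Fin r → ℕ, (∀ j, N j ≤ M j) → N ∈ X

/-- `M` is a maximal monomial of `X` with respect to divisibility. -/
def IsMaxMon {r : ℕ} (X : Finset (Fin r → ℕ)) (M : Fin r → ℕ) : Prop :=
  M ∈ X ∧ ∀ N ∈ X, (∀ j, M j ≤ N j) → N = M

/-- `X` is a pure order ideal with socle degree `e`: it is an order ideal whose maximal
degree is `e` and all of whose maximal monomials have degree `e`. -/
def IsPureWithSocle {r : ℕ} (X : Finset (Fin r → ℕ)) (e : ℕ) : Prop :=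
  IsOrderIdeal X ∧ (∀ M ∈ X, monDeg M ≤ e) ∧ (∃ M ∈ X, monDeg M = e) ∧
    ∀ M, IsMaxMon X M → monDeg M = e

/-- `h` agrees in degrees `≤ e` with the h-vector of `X`. -/
def HasHVector {r : ℕ} (X : Finset (Fin r → ℕ)) (h : ℕ → ℕ) (e : ℕ) : Prop :=
  ∀ i ≤ e, h i = (X.filter fun M => monDeg M = i).card

/-- `h` is (in degrees `≤ e`) a pure O-sequence of socle degree `e`. -/
def IsPureOSeq (h : ℕ → ℕ) (e : ℕ) : Prop :=
  ∃ (r : ℕ) (X : Finset (Fin r → ℕ)), IsPureWithSocle X e ∧ HasHVector X h e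

/-- `h` is a pure O-sequence of socle degree `e` and type `t`. -/
def IsPureOSeqOfType (h : ℕ → ℕ) (e t : ℕ) : Prop :=
  ∃ (r : ℕ) (X : Finset (Fin r → ℕ)), IsPureWithSocle X e ∧ HasHVector X h e ∧
    {M : Fin r → ℕ | IsMaxMon X M}.ncard = t

/-- `((n)_(d))_1^1`, computed from the `d`-binomial (Macaulay) expansion of `n`
obtained greedily; by convention `((0)_(d))_1^1 = 0`. -/
def macaulayBound : ℕ → ℕ → ℕ
  | 0, _ => 0
  | (n+1), d =>
      Nat.choose (Nat.findGreatest (fun k => Nat.choose k d ≤ n + 1) (n + 1 + d) + 1) (d + 1) +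
        macaulayBound
          ((n + 1) - Nat.choose (Nat.findGreatest (fun k => Nat.choose k d ≤ n + 1) (n + 1 + d)) d)
          (d - 1)
  termination_by n d => n
  decreasing_by
    have hd : d ≤ Nat.findGreatest (fun k => Nat.choose k d ≤ n + 1) (n + 1 + d) :=
      Nat.le_findGreatest (by omega) (by simp [Nat.choose_self])
    have hpos := Nat.choose_pos hd
    omega

/-- `g` satisfies Macaulay's bound (in degrees `1 ≤ i ≤ e - 1`). -/
def SatisfiesMacaulay (g : ℕ → ℕ) (e : ℕ) : Prop :=
  ∀ i, 1 ≤ i → i + 1 ≤ e → g (i + 1) ≤ macaulayBound (g i) i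

/-- `h` is an O-sequence of socle degree `e`. -/
def IsOSeq (h : ℕ → ℕ) (e : ℕ) : Prop :=
  h 0 = 1 ∧ (∀ i ≤ e, 0 < h i) ∧ SatisfiesMacaulay h e

/-- `h` is differentiable: its first difference `(1, h 1 - h 0, …, h e - h (e-1))`
consists of nonnegative integers and satisfies Macaulay's bound. -/
def IsDifferentiable (h : ℕ → ℕ) (e : ℕ) : Prop :=
  h 0 = 1 ∧ (∀ i, 1 ≤ i → i ≤ e → h (i - 1) ≤ h i) ∧
    SatisfiesMacaulay (fun i => if i = 0 then 1 else h i - h (i - 1)) e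

/-! The monomials of degree one in an order ideal are the variables dividing some maximal
monomial, and a maximal monomial of degree `e` involves at most `e` variables, so `h₁ ≤ t e`.
If `h₁ = t e`, the supports of the `t` maximal monomials are pairwise disjoint sets of exactly
`e` variables; hence the maximal monomials are squarefree, every monomial of the ideal is
determined by its support, a subset of one of these disjoint supports, and `h_i = t · C(e, i)`
for `1 ≤ i ≤ e`. The order ideal generated by `t` squarefree monomials of degree `e` in
disjoint blocks of variables realises this h-vector. -/

open Finset

theorem Finset.pairwiseDisjoint_of_sum_card_le_card_biUnion {ι α : Type*} [DecidableEq ι]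
    [DecidableEq α] {s : Finset ι} {f : ι → Finset α}
    (h : ∑ i ∈ s, #(f i) ≤ #(s.biUnion f)) : (s : Set ι).PairwiseDisjoint f := by
  induction s using Finset.induction_on with
  | empty => simp
  | insert a s ha ih =>
    rw [sum_insert ha, biUnion_insert] at h
    have hunion := card_union_add_card_inter (f a) (s.biUnion f)
    have hle : #(s.biUnion f) ≤ ∑ i ∈ s, #(f i) := card_biUnion_le
    have hdisj : Disjoint (f a) (s.biUnion f) := by
      rw [disjoint_iff_inter_eq_empty, ← card_eq_zero]
      omega
    rw [coe_insert, Set.pairwiseDisjoint_insert]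
    exact ⟨ih (by omega), fun b hb _ => hdisj.mono_right (subset_biUnion_of_mem f hb)⟩

theorem Set.PairwiseDisjoint.powersetCard {ι α : Type*} {s : Set ι} {f : ι → Finset α}
    (hf : s.PairwiseDisjoint f) {n : ℕ} (hn : n ≠ 0) :
    s.PairwiseDisjoint fun i => (f i).powersetCard n := by
  intro a ha b hb hab
  rw [Function.onFun, Finset.disjoint_left]
  intro A hA hB
  rw [mem_powersetCard] at hA hB
  obtain ⟨j, hj⟩ := card_pos.1 (by omega : 0 < #A)
  exact Finset.disjoint_left.1 (hf ha hb hab) (hA.1 hj) (hB.1 hj)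

section Monomials

variable {r : ℕ}

def monSupp (M : Fin r → ℕ) : Finset (Fin r) := univ.filter (M · ≠ 0)

def sqfreeMon (A : Finset (Fin r)) : Fin r → ℕ := fun j => if j ∈ A then 1 else 0

def IsSquarefreeMon (M : Fin r → ℕ) : Prop := ∀ j, M j ≤ 1

instance (M : Fin r → ℕ) : Decidable (IsSquarefreeMon M) :=
  inferInstanceAs (Decidable (∀ j, M j ≤ 1))

@[simp]
theorem mem_monSupp {M : Fin r → ℕ} {j : Fin r} : j ∈ monSupp M ↔ M j ≠ 0 := by
  simp [monSupp]

theorem monDeg_mono {M N : Fin r → ℕ} (h : M ≤ N) : monDeg M ≤ monDeg N :=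
  sum_le_sum fun j _ => h j

theorem monDeg_eq_zero_iff {M : Fin r → ℕ} : monDeg M = 0 ↔ M = 0 := by
  simp [monDeg, sum_eq_zero_iff, funext_iff]

theorem monSupp_mono {M N : Fin r → ℕ} (h : M ≤ N) : monSupp M ⊆ monSupp N := by
  intro j hj
  rw [mem_monSupp] at hj ⊢
  have : M j ≤ N j := h j
  omega

theorem card_monSupp_le_monDeg (M : Fin r → ℕ) : #(monSupp M) ≤ monDeg M := by
  calc #(monSupp M) = ∑ j ∈ monSupp M, 1 := card_eq_sum_ones _
    _ ≤ ∑ j ∈ monSupp M, M j :=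
      sum_le_sum fun j hj => Nat.one_le_iff_ne_zero.2 (mem_monSupp.1 hj)
    _ = monDeg M := sum_filter_ne_zero _

theorem isSquarefreeMon_of_monDeg_le_card_monSupp {M : Fin r → ℕ}
    (h : monDeg M ≤ #(monSupp M)) : IsSquarefreeMon M := by
  have hsum : ∑ j ∈ monSupp M, 1 = ∑ j ∈ monSupp M, M j := by
    rw [← card_eq_sum_ones, monSupp, sum_filter_ne_zero]
    exact le_antisymm (card_monSupp_le_monDeg M) h
  intro j
  by_cases hj : j ∈ monSupp M
  · exact ((sum_eq_sum_iff_of_le fun k hk =>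
      Nat.one_le_iff_ne_zero.2 (mem_monSupp.1 hk)).1 hsum j hj).ge
  · simp_all

theorem isSquarefreeMon_of_monDeg_le_one {M : Fin r → ℕ} (h : monDeg M ≤ 1) :
    IsSquarefreeMon M :=
  fun j => (single_le_sum (fun k _ => Nat.zero_le (M k)) (mem_univ j)).trans h

@[simp]
theorem monSupp_sqfreeMon (A : Finset (Fin r)) : monSupp (sqfreeMon A) = A := by
  ext j
  simp [sqfreeMon]

theorem sqfreeMon_injective : Function.Injective (sqfreeMon (r := r)) :=
  Function.LeftInverse.injective monSupp_sqfreeMon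

@[simp]
theorem monDeg_sqfreeMon (A : Finset (Fin r)) : monDeg (sqfreeMon A) = #A := by
  simp [monDeg, sqfreeMon]

theorem isSquarefreeMon_sqfreeMon (A : Finset (Fin r)) : IsSquarefreeMon (sqfreeMon A) := by
  intro j
  unfold sqfreeMon
  split_ifs <;> omega

theorem sqfreeMon_monSupp {M : Fin r → ℕ} (h : IsSquarefreeMon M) :
    sqfreeMon (monSupp M) = M := by
  funext j
  have := h j
  by_cases hj : M j = 0 <;> simp [sqfreeMon, hj]; omega

theorem monDeg_eq_card_monSupp {M : Fin r → ℕ} (h : IsSquarefreeMon M) :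
    monDeg M = #(monSupp M) := by
  conv_lhs => rw [← sqfreeMon_monSupp h]
  exact monDeg_sqfreeMon _

theorem sqfreeMon_le_iff {A : Finset (Fin r)} {M : Fin r → ℕ} :
    sqfreeMon A ≤ M ↔ A ⊆ monSupp M := by
  refine ⟨fun h => by simpa using monSupp_mono h, fun h j => ?_⟩
  unfold sqfreeMon
  split_ifs with hj
  · exact Nat.one_le_iff_ne_zero.2 (mem_monSupp.1 (h hj))
  · exact Nat.zero_le _

end Monomials

section OrderIdeal

variable {r : ℕ} {X : Finset (Fin r → ℕ)}

-- `IsMaxMon X` spelled out, so that the filter is decidable.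
def maxMons (X : Finset (Fin r → ℕ)) : Finset (Fin r → ℕ) :=
  X.filter fun M => ∀ N ∈ X, (∀ j, M j ≤ N j) → N = M

theorem mem_maxMons {M : Fin r → ℕ} : M ∈ maxMons X ↔ IsMaxMon X M :=
  mem_filter

theorem ncard_setOf_isMaxMon (X : Finset (Fin r → ℕ)) :
    {M | IsMaxMon X M}.ncard = #(maxMons X) := by
  rw [← Set.ncard_coe_finset]
  congr 1
  ext M
  exact mem_maxMons.symm

theorem exists_mem_maxMons_le {N : Fin r → ℕ} (hN : N ∈ X) :
    ∃ M ∈ maxMons X, N ≤ M := by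
  obtain ⟨M, hNM, hM, hmax⟩ := X.exists_le_maximal hN
  exact ⟨M, mem_maxMons.2 ⟨hM, fun N' hN' hle => le_antisymm (hmax hN' hle) hle⟩, hNM⟩

theorem IsOrderIdeal.filter_monDeg_eq_zero (hX : IsOrderIdeal X) :
    X.filter (monDeg · = 0) = {0} := by
  ext N
  rw [mem_filter, mem_singleton, monDeg_eq_zero_iff]
  refine ⟨And.right, ?_⟩
  rintro rfl
  obtain ⟨M, hM⟩ := hX.1
  exact ⟨hX.2 M hM 0 fun j => Nat.zero_le _, rfl⟩

theorem IsOrderIdeal.filter_squarefree_monDeg_eq (hX : IsOrderIdeal X) (i : ℕ) :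
    X.filter (fun N => IsSquarefreeMon N ∧ monDeg N = i) =
      ((maxMons X).biUnion fun M => (monSupp M).powersetCard i).image sqfreeMon := by
  ext N
  simp only [mem_filter, mem_image, mem_biUnion, mem_powersetCard]
  constructor
  · rintro ⟨hN, hsq, rfl⟩
    obtain ⟨M, hM, hNM⟩ := exists_mem_maxMons_le hN
    exact ⟨monSupp N, ⟨M, hM, monSupp_mono hNM, (monDeg_eq_card_monSupp hsq).symm⟩,
      sqfreeMon_monSupp hsq⟩
  · rintro ⟨A, ⟨M, hM, hAM, rfl⟩, rfl⟩
    exact ⟨hX.2 M (mem_maxMons.1 hM).1 _ (sqfreeMon_le_iff.2 hAM),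
      isSquarefreeMon_sqfreeMon A, monDeg_sqfreeMon A⟩

theorem IsOrderIdeal.card_filter_monDeg_eq_one (hX : IsOrderIdeal X) :
    #(X.filter (monDeg · = 1)) = #((maxMons X).biUnion monSupp) := by
  have hsq : X.filter (monDeg · = 1) = X.filter fun N => IsSquarefreeMon N ∧ monDeg N = 1 :=
    filter_congr fun N _ =>
      ⟨fun h => ⟨isSquarefreeMon_of_monDeg_le_one h.le, h⟩, And.right⟩
  simp only [hsq, hX.filter_squarefree_monDeg_eq, powersetCard_one, map_eq_image,
    ← biUnion_image, card_image_of_injective _ sqfreeMon_injective]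
  exact card_image_of_injective _ singleton_injective

theorem IsOrderIdeal.card_filter_monDeg_eq_sum_choose (hX : IsOrderIdeal X)
    (hsq : ∀ M ∈ maxMons X, IsSquarefreeMon M)
    (hdisj : (maxMons X : Set (Fin r → ℕ)).PairwiseDisjoint monSupp) {i : ℕ} (hi : i ≠ 0) :
    #(X.filter (monDeg · = i)) = ∑ M ∈ maxMons X, (#(monSupp M)).choose i := by
  have hX_sq : ∀ N ∈ X, IsSquarefreeMon N := fun N hN => by
    obtain ⟨M, hM, hNM⟩ := exists_mem_maxMons_le hN
    exact fun j => (hNM j).trans (hsq M hM j)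
  have hfilter :
      X.filter (monDeg · = i) = X.filter fun N => IsSquarefreeMon N ∧ monDeg N = i :=
    filter_congr fun N hN => (and_iff_right (hX_sq N hN)).symm
  rw [hfilter, hX.filter_squarefree_monDeg_eq, card_image_of_injective _ sqfreeMon_injective,
    card_biUnion (hdisj.powersetCard hi)]
  simp only [card_powersetCard]

end OrderIdeal

section Pure

variable {r e : ℕ} {X : Finset (Fin r → ℕ)}

theorem IsPureWithSocle.card_filter_monDeg_eq_one_le (hX : IsPureWithSocle X e) :
    #(X.filter (monDeg · = 1)) ≤ #(maxMons X) * e := by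
  rw [hX.1.card_filter_monDeg_eq_one]
  exact card_biUnion_le_card_mul _ _ _ fun M hM =>
    (card_monSupp_le_monDeg M).trans_eq (hX.2.2.2 M (mem_maxMons.1 hM))

/-- The h-vector `(1, t * e.choose 1, …, t * e.choose e)` of the order ideal generated by `t`
squarefree monomials of degree `e` in pairwise disjoint sets of variables. -/
def sharpHVector (t e i : ℕ) : ℕ :=
  if i = 0 then 1 else if i ≤ e then t * e.choose i else 0

theorem IsPureWithSocle.card_filter_monDeg_eq_sharpHVector (hX : IsPureWithSocle X e)
    (h1 : #(X.filter (monDeg · = 1)) = #(maxMons X) * e) {i : ℕ} (hi : i ≤ e) :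
    #(X.filter (monDeg · = i)) = sharpHVector #(maxMons X) e i := by
  have hdeg : ∀ M ∈ maxMons X, monDeg M = e := fun M hM => hX.2.2.2 M (mem_maxMons.1 hM)
  have hunion : #((maxMons X).biUnion monSupp) = ∑ M ∈ maxMons X, monDeg M := by
    rw [← hX.1.card_filter_monDeg_eq_one, h1, sum_const_nat hdeg]
  -- `∑ #(monSupp M) ≤ ∑ monDeg M = h₁ = #(⋃ monSupp M) ≤ ∑ #(monSupp M)`: all equalities.
  have hsupp : ∀ M ∈ maxMons X, #(monSupp M) = monDeg M :=
    (sum_eq_sum_iff_of_le fun M _ => card_monSupp_le_monDeg M).1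
      ((sum_le_sum fun M _ => card_monSupp_le_monDeg M).antisymm (hunion ▸ card_biUnion_le))
  have hdisj := pairwiseDisjoint_of_sum_card_le_card_biUnion
    (by rw [sum_congr rfl hsupp, hunion])
  rcases Nat.eq_zero_or_pos i with rfl | hi0
  · simp [sharpHVector, hX.1.filter_monDeg_eq_zero]
  · rw [hX.1.card_filter_monDeg_eq_sum_choose
      (fun M hM => isSquarefreeMon_of_monDeg_le_card_monSupp (hsupp M hM).ge) hdisj hi0.ne',
      sum_congr rfl fun M hM => by rw [hsupp M hM, hdeg M hM], sum_const, smul_eq_mul]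
    simp [sharpHVector, hi0.ne', hi]

end Pure

section Generated

variable {r e : ℕ} {G : Finset (Fin r → ℕ)}

theorem isOrderIdeal_biUnion_Iic (hG : G.Nonempty) : IsOrderIdeal (G.biUnion Iic) := by
  refine ⟨hG.biUnion fun M _ => nonempty_Iic, fun M hM N hNM => ?_⟩
  obtain ⟨M', hM', hMM'⟩ := mem_biUnion.1 hM
  exact mem_biUnion.2 ⟨M', hM', mem_Iic.2 ((show N ≤ M from hNM).trans (mem_Iic.1 hMM'))⟩

theorem maxMons_biUnion_Iic (hG : IsAntichain (· ≤ ·) (G : Set (Fin r → ℕ))) :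
    maxMons (G.biUnion Iic) = G := by
  ext M
  simp only [mem_maxMons, IsMaxMon, mem_biUnion, mem_Iic]
  constructor
  · rintro ⟨⟨M', hM', hMM'⟩, hmax⟩
    rwa [hmax M' ⟨M', hM', le_rfl⟩ hMM'] at hM'
  · intro hM
    refine ⟨⟨M, hM, le_rfl⟩, fun N ⟨M', hM', hNM'⟩ hMN => ?_⟩
    obtain rfl : M = M' := hG.eq hM hM' ((show M ≤ N from hMN).trans hNM')
    exact le_antisymm hNM' hMN

theorem isPureWithSocle_biUnion_Iic (hne : G.Nonempty)
    (hG : IsAntichain (· ≤ ·) (G : Set (Fin r → ℕ))) (hdeg : ∀ M ∈ G, monDeg M = e) :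
    IsPureWithSocle (G.biUnion Iic) e := by
  refine ⟨isOrderIdeal_biUnion_Iic hne, fun N hN => ?_, ?_, fun M hM => hdeg M ?_⟩
  · obtain ⟨M, hM, hNM⟩ := mem_biUnion.1 hN
    exact (monDeg_mono (mem_Iic.1 hNM)).trans_eq (hdeg M hM)
  · obtain ⟨M, hM⟩ := hne
    exact ⟨M, mem_biUnion.2 ⟨M, hM, mem_Iic.2 le_rfl⟩, hdeg M hM⟩
  · rw [← maxMons_biUnion_Iic hG]
    exact mem_maxMons.2 hM

end Generated

section Blocks

variable {t e : ℕ}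

def block (t e : ℕ) (k : Fin t) : Finset (Fin (t * e)) :=
  univ.map ((Function.Embedding.sectR k (Fin e)).trans finProdFinEquiv.toEmbedding)

theorem card_block (k : Fin t) : #(block t e k) = e := by
  simp [block]

theorem biUnion_block : univ.biUnion (block t e) = univ :=
  eq_univ_of_forall fun j => mem_biUnion.2 ⟨(finProdFinEquiv.symm j).1, mem_univ _,
    mem_map.2 ⟨(finProdFinEquiv.symm j).2, mem_univ _, finProdFinEquiv.apply_symm_apply j⟩⟩

theorem block_subset_block_iff (he : 0 < e) {k k' : Fin t} :
    block t e k ⊆ block t e k' ↔ k = k' := by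
  refine ⟨fun h => ?_, fun h => h ▸ subset_rfl⟩
  obtain ⟨i, -, hi⟩ := mem_map.1 (h (mem_map_of_mem _ (mem_univ ⟨0, he⟩)))
  exact (congrArg Prod.fst (finProdFinEquiv.injective hi)).symm

def blockGens (t e : ℕ) : Finset (Fin (t * e) → ℕ) :=
  univ.image fun k => sqfreeMon (block t e k)

theorem card_blockGens (he : 0 < e) : #(blockGens t e) = t := by
  rw [blockGens, card_image_of_injective, card_fin]
  exact fun k k' h => (block_subset_block_iff he).1 (sqfreeMon_injective h).subset

theorem isAntichain_blockGens (he : 0 < e) :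
    IsAntichain (· ≤ ·) (blockGens t e : Set (Fin (t * e) → ℕ)) := by
  rintro _ hM _ hN hne hle
  simp only [blockGens, coe_image, coe_univ, Set.image_univ, Set.mem_range] at hM hN
  obtain ⟨k, rfl⟩ := hM
  obtain ⟨k', rfl⟩ := hN
  rw [sqfreeMon_le_iff, monSupp_sqfreeMon, block_subset_block_iff he] at hle
  exact hne (hle ▸ rfl)

theorem isPureOSeqOfType_sharpHVector (ht : 0 < t) (he : 0 < e) :
    IsPureOSeqOfType (sharpHVector t e) e t := by
  have hpure : IsPureWithSocle ((blockGens t e).biUnion Iic) e :=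
    isPureWithSocle_biUnion_Iic ⟨_, mem_image_of_mem _ (mem_univ ⟨0, ht⟩)⟩
      (isAntichain_blockGens he) (by simp [blockGens, card_block])
  have hmax := maxMons_biUnion_Iic (isAntichain_blockGens (t := t) he)
  have htype : #(maxMons ((blockGens t e).biUnion Iic)) = t := by
    rw [hmax, card_blockGens he]
  have h1 : #(((blockGens t e).biUnion Iic).filter (monDeg · = 1)) = t * e := by
    rw [hpure.1.card_filter_monDeg_eq_one, hmax, blockGens, image_biUnion]
    simp [biUnion_block]
  refine ⟨t * e, _, hpure, fun i hi => ?_, by rw [ncard_setOf_isMaxMon, htype]⟩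
  rw [hpure.card_filter_monDeg_eq_sharpHVector (by rw [h1, htype]) hi, htype]

end Blocks

theorem IsPureOSeqOfType.apply_one_le {h : ℕ → ℕ} {e t : ℕ} (hh : IsPureOSeqOfType h e t)
    (he : 0 < e) : h 1 ≤ t * e := by
  obtain ⟨r, X, hX, hvec, rfl⟩ := hh
  rw [hvec 1 he, ncard_setOf_isMaxMon]
  exact hX.card_filter_monDeg_eq_one_le

theorem IsPureOSeqOfType.eq_sharpHVector {h : ℕ → ℕ} {e t : ℕ} (hh : IsPureOSeqOfType h e t)
    (he : 0 < e) (h1 : h 1 = t * e) (htail : ∀ i, e < i → h i = 0) : h = sharpHVector t e := by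
  obtain ⟨r, X, hX, hvec, rfl⟩ := hh
  rw [ncard_setOf_isMaxMon] at h1 ⊢
  funext i
  rcases le_or_gt i e with hi | hi
  · rw [hvec i hi, hX.card_filter_monDeg_eq_sharpHVector (by rw [← hvec 1 he, h1]) hi]
  · simp [htail i hi, sharpHVector, hi.not_ge, (Nat.zero_le e).trans_lt hi |>.ne']

/-- For positive integers `r, t, e` with `r > te` there is no pure
O-sequence of codimension `r`, socle degree `e` and type `t`; and the bound is sharp:
for `r = te` there is exactly one such pure O-sequence. -/
theorem no_pure_of_large_codim_and_sharp (t e : ℕ) (ht : 0 < t) (he : 0 < e) :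
    (∀ r : ℕ, t * e < r →
      ¬ ∃ h : ℕ → ℕ, IsPureOSeqOfType h e t ∧ h 1 = r) ∧
    (∃! h : ℕ → ℕ,
      IsPureOSeqOfType h e t ∧ h 1 = t * e ∧ ∀ i, e < i → h i = 0) := by
  refine ⟨fun r hr ⟨h, hh, h1⟩ => (h1 ▸ hh.apply_one_le he).not_gt hr, sharpHVector t e,
    ⟨isPureOSeqOfType_sharpHVector ht he, ?_, fun i hi => ?_⟩,
    fun h ⟨hh, h1, htail⟩ => hh.eq_sharpHVector he h1 htail⟩
  · simp [sharpHVector, Nat.one_le_iff_ne_zero.1 he]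
  · simp [sharpHVector, hi.not_ge, (Nat.zero_le e).trans_lt hi |>.ne']
end

section
/- For all positive integers r and e, the number of pure O-sequences of codimension r, socle degree e and type 1 equals the number p_r(e) of partitions of the integer e into exactly r positive parts. -/
/-!
A pure order ideal of type one is the set of divisors of its unique maximal monomial `M`, so its
h-vector is the coefficient sequence of `∏ⱼ (1 + t + ⋯ + t ^ Mⱼ)`. This depends only on the
multiset of nonzero exponents of `M`, a partition of `e` into `h₁` parts. Conversely the partition
is recovered from the h-vector: multiplying by `(1 - t) ^ h₁` gives `∏ⱼ (1 - t ^ (Mⱼ + 1))`, and in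
a product `∏ (1 - t ^ b)` over positive `b` the smallest `b` and its multiplicity can be read off
from the coefficient of `t ^ b`, so the factors can be peeled off one at a time.
-/

open Polynomial Finset

lemma X_pow_succ_dvd_prod_one_sub_X_pow_sub {R : Type*} [CommRing R] {b : ℕ} (hb : 0 < b)
    {s : Multiset ℕ} (hs : ∀ c ∈ s, b ≤ c) :
    X ^ (b + 1) ∣ (s.map fun c => 1 - X ^ c : Multiset R[X]).prod -
      (1 - (s.count b : R[X]) * X ^ b) := by
  obtain ⟨b, rfl⟩ : ∃ b', b = b' + 1 := ⟨b - 1, by omega⟩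
  induction s using Multiset.induction_on with
  | empty => simp
  | cons c s ih =>
    obtain ⟨Q, hQ⟩ := ih fun d hd => hs d (Multiset.mem_cons_of_mem hd)
    rw [sub_eq_iff_eq_add] at hQ
    rw [Multiset.map_cons, Multiset.prod_cons, hQ]
    rcases (hs c (Multiset.mem_cons_self c s)).eq_or_lt with rfl | hbc
    · refine ⟨(s.count (b + 1) : R[X]) * X ^ b + (1 - X ^ (b + 1)) * Q, ?_⟩
      simp only [Multiset.count_cons_self]
      push_cast
      ring
    · obtain ⟨d, rfl⟩ := Nat.exists_eq_add_of_lt hbc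
      refine ⟨-X ^ d + (s.count (b + 1) : R[X]) * X ^ (b + 1 + d) +
        (1 - X ^ (b + 1 + d + 1)) * Q, ?_⟩
      rw [Multiset.count_cons_of_ne (by omega)]
      ring

lemma count_eq_of_prod_one_sub_X_pow_eq {R : Type*} [CommRing R] [CharZero R] {b : ℕ}
    (hb : 0 < b) {s t : Multiset ℕ} (hs : ∀ c ∈ s, b ≤ c) (ht : ∀ c ∈ t, b ≤ c)
    (h : (s.map fun c => 1 - X ^ c : Multiset R[X]).prod = (t.map fun c => 1 - X ^ c).prod) :
    s.count b = t.count b := by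
  have hdvd := dvd_sub (X_pow_succ_dvd_prod_one_sub_X_pow_sub (R := R) hb ht)
    (X_pow_succ_dvd_prod_one_sub_X_pow_sub (R := R) hb hs)
  rw [h, sub_sub_sub_cancel_left, sub_sub_sub_cancel_left, ← sub_mul, X_pow_dvd_iff] at hdvd
  simpa [coeff_mul_X_pow', sub_eq_zero, eq_comm] using hdvd b b.lt_succ_self

lemma prod_one_sub_X_pow_injective {R : Type*} [CommRing R] [IsDomain R] [CharZero R]
    {s t : Multiset ℕ} (hs : ∀ b ∈ s, 0 < b) (ht : ∀ b ∈ t, 0 < b)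
    (h : (s.map fun b => 1 - X ^ b : Multiset R[X]).prod = (t.map fun b => 1 - X ^ b).prod) :
    s = t := by
  induction s using Multiset.strongInductionOn generalizing t with
  | ih s ih =>
  rcases eq_or_ne (s + t) 0 with hst | hst
  · obtain ⟨rfl, rfl⟩ := add_eq_zero.1 hst
    rfl
  obtain ⟨b, hb, hmin⟩ := (s + t).toFinset.exists_min_image id (Multiset.toFinset_nonempty.2 hst)
  simp only [Multiset.mem_toFinset, Multiset.mem_add, id] at hb hmin
  have hcount := count_eq_of_prod_one_sub_X_pow_eq (R := R) (hb.elim (hs b) (ht b))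
    (fun c hc => hmin c (.inl hc)) (fun c hc => hmin c (.inr hc)) h
  have hbs : b ∈ s := by
    rcases hb with hb | hb
    · exact hb
    · rw [← Multiset.count_pos, hcount, Multiset.count_pos]; exact hb
  have hbt : b ∈ t := by rw [← Multiset.count_pos, ← hcount, Multiset.count_pos]; exact hbs
  rw [← Multiset.cons_erase hbs, ← Multiset.cons_erase hbt, Multiset.map_cons, Multiset.map_cons,
    Multiset.prod_cons, Multiset.prod_cons] at h
  have hne : (1 - X ^ b : R[X]) ≠ 0 := by
    rw [← neg_sub, neg_ne_zero, ← C_1]; exact X_pow_sub_C_ne_zero (hs b hbs) 1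
  rw [← Multiset.cons_erase hbs, ← Multiset.cons_erase hbt,
    ih _ (Multiset.erase_lt.2 hbs) (fun c hc => hs c (Multiset.mem_of_mem_erase hc))
      (fun c hc => ht c (Multiset.mem_of_mem_erase hc)) (mul_left_cancel₀ hne h)]

/-- The h-polynomial of the divisors of a monomial whose multiset of exponents is `s`. -/
noncomputable def hPoly (s : Multiset ℕ) : ℕ[X] :=
  (s.map fun a => ∑ i ∈ range (a + 1), X ^ i).prod

lemma hPoly_filter_ne_zero (s : Multiset ℕ) : hPoly (s.filter (· ≠ 0)) = hPoly s := by
  have hzero : ((s.filter (¬ · ≠ 0)).map fun a => ∑ i ∈ range (a + 1), (X : ℕ[X]) ^ i).prod = 1 :=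
    Multiset.prod_eq_one (by simp +contextual)
  conv_rhs => rw [← Multiset.filter_add_not (· ≠ 0) s]
  rw [hPoly, hPoly, Multiset.map_add, Multiset.prod_add, hzero, mul_one]

lemma coeff_one_hPoly {s : Multiset ℕ} (hs : ∀ a ∈ s, 0 < a) :
    (hPoly s).coeff 1 = Multiset.card s := by
  induction s using Multiset.induction_on with
  | empty => simp [hPoly, coeff_one]
  | cons a s ih =>
    have hcoeff0 : (hPoly s).coeff 0 = 1 := by
      simp [hPoly, coeff_zero_eq_eval_zero, eval_multiset_prod, eval_finsetSum]
    have ha := (hs a (Multiset.mem_cons_self a s)).ne'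
    rw [hPoly, Multiset.map_cons, Multiset.prod_cons, ← hPoly, coeff_mul, Nat.sum_antidiagonal_succ]
    simp [finsetSum_coeff, coeff_X_pow, hcoeff0, ha,
      ih fun b hb => hs b (Multiset.mem_cons_of_mem hb)]

lemma map_hPoly_mul_one_sub_X_pow_card {R : Type*} [CommRing R] (s : Multiset ℕ) :
    (hPoly s).map (Nat.castRingHom R) * (1 - X) ^ Multiset.card s =
      (s.map fun a => 1 - X ^ (a + 1) : Multiset R[X]).prod := by
  induction s using Multiset.induction_on with
  | empty => simp [hPoly]
  | cons a s ih =>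
    rw [hPoly, Multiset.map_cons, Multiset.prod_cons, ← hPoly, Polynomial.map_mul,
      Multiset.card_cons, pow_succ, Multiset.map_cons, Multiset.prod_cons, ← ih,
      ← geom_sum_mul_neg]
    simp only [Polynomial.map_sum, Polynomial.map_pow, map_X]
    ring

lemma hPoly_injective_of_card_eq {s t : Multiset ℕ} (hcard : Multiset.card s = Multiset.card t)
    (h : hPoly s = hPoly t) : s = t := by
  have hprod := map_hPoly_mul_one_sub_X_pow_card (R := ℤ) s
  rw [h, hcard, map_hPoly_mul_one_sub_X_pow_card] at hprod
  have hshift (u : Multiset ℕ) : (u.map fun a => (1 : ℤ[X]) - X ^ (a + 1)) =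
      (u.map (· + 1)).map fun b => 1 - X ^ b := by
    rw [Multiset.map_map]; rfl
  rw [hshift, hshift] at hprod
  exact Multiset.map_injective (add_left_injective 1)
    (prod_one_sub_X_pow_injective (by simp) (by simp) hprod).symm

lemma monDeg_mono_s13 {n : ℕ} : Monotone (monDeg (r := n)) :=
  fun _ _ h => sum_le_sum fun j _ => h j

lemma monDeg_eq_sum_ofFn {n : ℕ} (M : Fin n → ℕ) : monDeg M = (List.ofFn M).sum :=
  List.sum_ofFn.symm

lemma coeff_hPoly_ofFn {n : ℕ} (M : Fin n → ℕ) (i : ℕ) :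
    (hPoly (List.ofFn M : Multiset ℕ)).coeff i = #{N ∈ Iic M | monDeg N = i} := by
  have hprod : hPoly (List.ofFn M : Multiset ℕ) = ∏ j, ∑ k ∈ Iic (M j), (X : ℕ[X]) ^ k := by
    simp [hPoly, ← Nat.range_succ_eq_Iic, List.prod_ofFn]
  rw [hprod, prod_univ_sum]
  simp_rw [prod_pow_eq_pow_sum, finsetSum_coeff, coeff_X_pow, sum_boole, eq_comm (a := i)]
  rfl

lemma coeff_hPoly_ofFn_eq_zero {n : ℕ} (M : Fin n → ℕ) {i : ℕ} (hi : monDeg M < i) :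
    (hPoly (List.ofFn M : Multiset ℕ)).coeff i = 0 := by
  rw [coeff_hPoly_ofFn, card_eq_zero, filter_eq_empty_iff]
  exact fun N hN hNi => (monDeg_mono_s13 (mem_Iic.1 hN)).not_gt (hNi ▸ hi)

lemma isMaxMon_iff_maximal {n : ℕ} {X : Finset (Fin n → ℕ)} {M : Fin n → ℕ} :
    IsMaxMon X M ↔ Maximal (· ∈ X) M :=
  ⟨fun hM => ⟨hM.1, fun _ hN hMN => (hM.2 _ hN hMN).le⟩,
    fun hM => ⟨hM.1, fun _ hN hMN => (hM.2 hN hMN).antisymm hMN⟩⟩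

lemma setOf_isMaxMon_Iic {n : ℕ} (M : Fin n → ℕ) : {N | IsMaxMon (Iic M) N} = {M} := by
  ext N
  simp only [isMaxMon_iff_maximal, Set.mem_ofPred_eq, Set.mem_singleton_iff, mem_Iic]
  exact ⟨fun hN => hN.1.antisymm (hN.2 le_rfl hN.1), fun hN => hN ▸ ⟨le_rfl, fun _ h _ => h⟩⟩

lemma isPureWithSocle_Iic {n : ℕ} (M : Fin n → ℕ) : IsPureWithSocle (Iic M) (monDeg M) := by
  refine ⟨⟨⟨M, mem_Iic.2 le_rfl⟩, fun N hN K hKN => mem_Iic.2 ((show K ≤ N from hKN).trans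
    (mem_Iic.1 hN))⟩, fun N hN => monDeg_mono_s13 (mem_Iic.1 hN), ⟨M, mem_Iic.2 le_rfl, rfl⟩, ?_⟩
  intro N hN
  rw [← Set.mem_ofPred_eq (p := IsMaxMon _), setOf_isMaxMon_Iic] at hN
  rw [hN]

lemma eq_Iic_of_setOf_isMaxMon_eq {n : ℕ} {X : Finset (Fin n → ℕ)} {M : Fin n → ℕ}
    (hX : IsOrderIdeal X) (hM : {N | IsMaxMon X N} = {M}) : X = Iic M := by
  have hmax : ∀ N, Maximal (· ∈ X) N ↔ N = M := fun N => by
    rw [← isMaxMon_iff_maximal, ← Set.mem_singleton_iff, ← hM, Set.mem_ofPred_eq]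
  ext N
  rw [mem_Iic]
  refine ⟨fun hN => ?_, fun hNM => hX.2 M ((hmax M).2 rfl).1 N hNM⟩
  obtain ⟨K, hNK, hK⟩ := X.exists_le_maximal hN
  exact (hmax K).1 hK ▸ hNK

lemma isPureOSeqOfType_one_iff_exists_monomial {h : ℕ → ℕ} {e : ℕ} :
    (IsPureOSeqOfType h e 1 ∧ ∀ i, e < i → h i = 0) ↔
      ∃ (n : ℕ) (M : Fin n → ℕ), monDeg M = e ∧ h = (hPoly (List.ofFn M : Multiset ℕ)).coeff := by
  constructor
  · rintro ⟨⟨n, X, hX, hvec, htype⟩, hvanish⟩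
    obtain ⟨M, hM⟩ := Set.ncard_eq_one.1 htype
    have hXM : X = Iic M := eq_Iic_of_setOf_isMaxMon_eq hX.1 hM
    have hdeg : monDeg M = e := hX.2.2.2 M (hM.symm ▸ rfl : M ∈ {N | IsMaxMon X N})
    refine ⟨n, M, hdeg, funext fun i => ?_⟩
    rcases le_or_gt i e with hi | hi
    · rw [hvec i hi, hXM, coeff_hPoly_ofFn]
    · rw [hvanish i hi, coeff_hPoly_ofFn_eq_zero M (hdeg ▸ hi)]
  · rintro ⟨n, M, rfl, rfl⟩
    refine ⟨⟨n, Iic M, isPureWithSocle_Iic M, fun i _ => coeff_hPoly_ofFn M i, ?_⟩,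
      fun i hi => coeff_hPoly_ofFn_eq_zero M hi⟩
    rw [setOf_isMaxMon_Iic, Set.ncard_singleton]

lemma exists_monomial_iff_exists_partition {h : ℕ → ℕ} {e : ℕ} :
    (∃ (n : ℕ) (M : Fin n → ℕ), monDeg M = e ∧ h = (hPoly (List.ofFn M : Multiset ℕ)).coeff) ↔
      ∃ p : Nat.Partition e, h = (hPoly p.parts).coeff := by
  constructor
  · rintro ⟨n, M, hM, rfl⟩
    refine ⟨Nat.Partition.ofSums e (List.ofFn M) (by rw [Multiset.sum_coe, ← hM,
      monDeg_eq_sum_ofFn]), ?_⟩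
    rw [Nat.Partition.ofSums_parts, hPoly_filter_ne_zero]
  · rintro ⟨p, rfl⟩
    have hofFn : List.ofFn p.parts.toList.get = p.parts.toList := List.ofFn_get _
    refine ⟨_, p.parts.toList.get, ?_, ?_⟩
    · rw [monDeg_eq_sum_ofFn, hofFn, ← Multiset.sum_coe, Multiset.coe_toList, p.parts_sum]
    · rw [hofFn, Multiset.coe_toList]

lemma isPureOSeqOfType_one_iff_exists_partition {h : ℕ → ℕ} {r e : ℕ} :
    (IsPureOSeqOfType h e 1 ∧ h 1 = r ∧ ∀ i, e < i → h i = 0) ↔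
      ∃ p : Nat.Partition e, Multiset.card p.parts = r ∧ (hPoly p.parts).coeff = h := by
  have hcard (p : Nat.Partition e) : (hPoly p.parts).coeff 1 = Multiset.card p.parts :=
    coeff_one_hPoly fun _ => p.parts_pos
  rw [and_left_comm, isPureOSeqOfType_one_iff_exists_monomial, exists_monomial_iff_exists_partition]
  constructor
  · rintro ⟨rfl, p, rfl⟩
    exact ⟨p, (hcard p).symm, rfl⟩
  · rintro ⟨p, rfl, rfl⟩
    exact ⟨hcard p, p, rfl⟩

theorem pure_type_one_count_eq_partitions_general (r e : ℕ) :
    {h : ℕ → ℕ | IsPureOSeqOfType h e 1 ∧ h 1 = r ∧ ∀ i, e < i → h i = 0}.ncard =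
      (Finset.univ.filter fun p : Nat.Partition e =>
        Multiset.card p.parts = r).card := by
  classical
  have hset : {h : ℕ → ℕ | IsPureOSeqOfType h e 1 ∧ h 1 = r ∧ ∀ i, e < i → h i = 0} =
      (univ.filter fun p : Nat.Partition e => Multiset.card p.parts = r).image
        fun p => (hPoly p.parts).coeff := by
    ext h
    simp [isPureOSeqOfType_one_iff_exists_partition]
  rw [hset, Set.ncard_coe_finset, card_image_of_injOn]
  intro p hp q hq hpq
  have hcard : Multiset.card p.parts = Multiset.card q.parts :=
    (mem_filter.1 hp).2.trans (mem_filter.1 hq).2.symm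
  exact Nat.Partition.ext (hPoly_injective_of_card_eq hcard (Polynomial.ext (congrFun hpq)))

/-- The number of pure O-sequences of codimension `r`, socle degree
`e` and type 1 equals the number of partitions of `e` into exactly `r` (positive)
parts. -/
theorem pure_type_one_count_eq_partitions (r e : ℕ) (hr : 0 < r) (he : 0 < e) :
    {h : ℕ → ℕ | IsPureOSeqOfType h e 1 ∧ h 1 = r ∧ ∀ i, e < i → h i = 0}.ncard =
      (Finset.univ.filter fun p : Nat.Partition e =>
        Multiset.card p.parts = r).card :=
  pure_type_one_count_eq_partitions_general r e
end
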